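/- arXiv:1503.04743 — 5 statements merged into one kernel-verified Lean document; each statement's English description precedes it below -/
import Mathlib

section
/- With θ the truncated energy defined by θ(𝒞) = Σ_{σ∈𝒞, |δ_ν(σ)|≤K} μ(σ)δ_ν(σ)² + 2K Σ_{σ∈𝒞, |δ_ν(σ)|>K} μ(σ)|δ_ν(σ)|: if 𝒞 ⪯ 𝒟 are partitions and every σ ∈ 𝒞 with |δ_ν(σ)| > K belongs to 𝒟 (that is, 𝒞_{ν>K} ⊆ 𝒟), then θ(𝒞) ≤ θ(𝒟). -/
open scoped Classical

/-- An additive function on a Boolean algebra. -/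
def IsAdditive {α : Type*} [BooleanAlgebra α] (ν : α → ℝ) : Prop :=
  ν ⊥ = 0 ∧ ∀ σ τ : α, ν (σ ⊔ τ) = ν σ + ν τ - ν (σ ⊓ τ)

/-- A partition: a finite set of pairwise disjoint elements. -/
def IsPartition {α : Type*} [BooleanAlgebra α] (A : Finset α) : Prop :=
  ∀ σ ∈ A, ∀ τ ∈ A, σ ≠ τ → σ ⊓ τ = ⊥

/-- `Refines A B` means `B` refines `A`. -/
def Refines {α : Type*} [BooleanAlgebra α] (A B : Finset α) : Prop :=
  B.sup id = A.sup id ∧ ∀ σ ∈ B, ∃ τ ∈ A, σ ≤ τ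

/-- The K-truncated energy θ(𝒞) of an additive ν with respect to μ. -/
noncomputable def truncEnergy {α : Type*} [BooleanAlgebra α]
    (μ ν : α → ℝ) (K : ℝ) (C : Finset α) : ℝ :=
  ∑ σ ∈ C.filter (fun σ => |ν σ / μ σ| ≤ K), μ σ * (ν σ / μ σ) ^ 2
    + 2 * K * ∑ σ ∈ C.filter (fun σ => K < |ν σ / μ σ|), μ σ * |ν σ / μ σ|

/-!
Writing `h` for the Huber function (`x ↦ x²` on `[-K, K]`, continued linearly outside),
`θ(𝒞) = ∑_{σ ∈ 𝒞} μ(σ) h(δ_ν(σ)) + K² μ(⋃ 𝒞_{ν>K})`.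
The first term is a sum of values of the perspective `(m, n) ↦ m h(n / m)` of the convex
function `h`; the perspective is subadditive, so by additivity of `μ` and `ν` the first term can
only grow when each `τ ∈ 𝒞` is split into the elements of `𝒟` below it.
The second term grows because `𝒞_{ν>K} ⊆ 𝒟_{ν>K}`.
-/

noncomputable def huber (K x : ℝ) : ℝ := if |x| ≤ K then x ^ 2 else 2 * K * |x| - K ^ 2

section Huber

variable {K : ℝ}

/-- `huber K` is the supremum of the affine functions `y ↦ 2 s y - s²` with `|s| ≤ K`. -/
lemma two_mul_mul_sub_sq_le_huber {s : ℝ} (hs : |s| ≤ K) (y : ℝ) :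
    2 * s * y - s ^ 2 ≤ huber K y := by
  unfold huber
  split_ifs with hy
  · nlinarith [sq_nonneg (y - s)]
  · have hsy : s * y ≤ |s| * |y| := (le_abs_self _).trans (abs_mul s y).le
    nlinarith [sq_abs s, mul_nonneg (sub_nonneg.2 hs) (by linarith : 0 ≤ 2 * |y| - K - |s|)]

/-- The supremum is attained at `s = max (-K) (min K x)`. -/
lemma exists_abs_le_huber_eq (hK : 0 ≤ K) (x : ℝ) :
    ∃ s, |s| ≤ K ∧ huber K x = 2 * s * x - s ^ 2 := by
  refine ⟨max (-K) (min K x),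
    abs_le.2 ⟨le_max_left _ _, max_le (by linarith) (min_le_left _ _)⟩, ?_⟩
  unfold huber
  rcases le_or_gt |x| K with hx | hx
  · rw [if_pos hx, min_eq_right (abs_le.1 hx).2, max_eq_right (abs_le.1 hx).1]
    ring
  · rw [if_neg hx.not_ge]
    rcases lt_abs.1 hx with hx' | hx'
    · rw [min_eq_left hx'.le, max_eq_right (by linarith), abs_of_pos (by linarith)]
    · rw [min_eq_right (by linarith), max_eq_left (by linarith), abs_of_neg (by linarith)]
      ring

lemma sum_mul_huber_div_sum_le (hK : 0 ≤ K) {ι : Type*} (t : Finset ι) (m n : ι → ℝ)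
    (hm : ∀ i ∈ t, 0 < m i) :
    (∑ i ∈ t, m i) * huber K ((∑ i ∈ t, n i) / ∑ i ∈ t, m i)
      ≤ ∑ i ∈ t, m i * huber K (n i / m i) := by
  rcases t.eq_empty_or_nonempty with rfl | ht
  · simp
  have hM : 0 < ∑ i ∈ t, m i := Finset.sum_pos hm ht
  obtain ⟨s, hs, hsupport⟩ := exists_abs_le_huber_eq hK ((∑ i ∈ t, n i) / ∑ i ∈ t, m i)
  calc (∑ i ∈ t, m i) * huber K ((∑ i ∈ t, n i) / ∑ i ∈ t, m i)
      = ∑ i ∈ t, (2 * s * n i - s ^ 2 * m i) := by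
        rw [hsupport, Finset.sum_sub_distrib, ← Finset.mul_sum, ← Finset.mul_sum]
        field_simp
    _ = ∑ i ∈ t, m i * (2 * s * (n i / m i) - s ^ 2) :=
        Finset.sum_congr rfl fun i hi => by field_simp [(hm i hi).ne']
    _ ≤ ∑ i ∈ t, m i * huber K (n i / m i) :=
        Finset.sum_le_sum fun i hi => mul_le_mul_of_nonneg_left
          (two_mul_mul_sub_sq_le_huber hs _) (hm i hi).le

end Huber

section Partition

variable {α : Type*} [BooleanAlgebra α]

lemma IsPartition.subset {A B : Finset α} (hA : IsPartition A) (hBA : B ⊆ A) :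
    IsPartition B :=
  fun σ hσ τ hτ hne => hA σ (hBA hσ) τ (hBA hτ) hne

lemma IsAdditive.map_sup_eq_sum {ν : α → ℝ} (hν : IsAdditive ν) {A : Finset α}
    (hA : IsPartition A) : ν (A.sup id) = ∑ σ ∈ A, ν σ := by
  induction A using Finset.induction_on with
  | empty => simpa using hν.1
  | @insert a s ha ih =>
    have hdisj : a ⊓ s.sup id = ⊥ := by
      rw [Finset.sup_inf_distrib_left, Finset.sup_eq_bot_iff]
      exact fun b hb => hA a (s.mem_insert_self a) b (Finset.mem_insert_of_mem hb)
        (fun hab => ha (hab ▸ hb))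
    rw [Finset.sup_insert, Finset.sum_insert ha, id_eq, hν.2, hdisj, hν.1,
      ih (hA.subset (s.subset_insert a))]
    ring

lemma Refines.biUnion_filter_le {C D : Finset α} (href : Refines C D) :
    C.biUnion (fun τ => D.filter (· ≤ τ)) = D := by
  ext σ
  simp only [Finset.mem_biUnion, Finset.mem_filter]
  exact ⟨fun ⟨_, _, hσ, _⟩ => hσ, fun hσ => (href.2 σ hσ).imp fun τ ⟨hτ, hle⟩ => ⟨hτ, hσ, hle⟩⟩

lemma IsPartition.pairwiseDisjoint_filter_le {C D : Finset α} (hC : IsPartition C)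
    (hD : ∀ σ ∈ D, σ ≠ ⊥) : (C : Set α).PairwiseDisjoint (fun τ => D.filter (· ≤ τ)) := by
  intro τ hτ τ' hτ' hne
  refine Finset.disjoint_left.2 fun σ hσ hσ' => ?_
  rw [Finset.mem_filter] at hσ hσ'
  exact hD σ hσ.1 (le_bot_iff.1 (hC τ hτ τ' hτ' hne ▸ le_inf hσ.2 hσ'.2))

lemma Refines.sum_eq_sum_sum_filter_le {C D : Finset α} (href : Refines C D)
    (hC : IsPartition C) (hD : ∀ σ ∈ D, σ ≠ ⊥) (f : α → ℝ) :
    ∑ σ ∈ D, f σ = ∑ τ ∈ C, ∑ σ ∈ D.filter (· ≤ τ), f σ := by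
  conv_lhs => rw [← href.biUnion_filter_le]
  exact Finset.sum_biUnion (hC.pairwiseDisjoint_filter_le hD)

lemma Refines.sup_filter_le {C D : Finset α} (href : Refines C D) (hC : IsPartition C)
    {τ : α} (hτ : τ ∈ C) : (D.filter (· ≤ τ)).sup id = τ := by
  refine le_antisymm (Finset.sup_le fun σ hσ => (Finset.mem_filter.1 hσ).2) ?_
  have hτD : τ ≤ (D.filter (· ≤ τ)).sup id ⊔ (D.filter (¬ · ≤ τ)).sup id := by
    rw [← Finset.sup_union, Finset.filter_union_filter_not_eq, href.1]
    exact Finset.le_sup (f := id) hτ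
  refine Disjoint.left_le_of_le_sup_right hτD (Finset.disjoint_sup_right.2 fun σ hσ => ?_)
  rw [Finset.mem_filter] at hσ
  obtain ⟨τ', hτ', hστ'⟩ := href.2 σ hσ.1
  have hne : τ ≠ τ' := fun h => hσ.2 (h ▸ hστ')
  exact (disjoint_iff.2 (hC τ hτ τ' hτ' hne)).mono_right hστ'

end Partition

lemma truncEnergy_eq_sum_mul_huber_add {α : Type*} [BooleanAlgebra α]
    (μ ν : α → ℝ) (K : ℝ) (A : Finset α) :
    truncEnergy μ ν K A = ∑ σ ∈ A, μ σ * huber K (ν σ / μ σ)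
      + K ^ 2 * ∑ σ ∈ A.filter (fun σ => K < |ν σ / μ σ|), μ σ := by
  simp only [truncEnergy, Finset.sum_filter, Finset.mul_sum, ← Finset.sum_add_distrib]
  refine Finset.sum_congr rfl fun σ _ => ?_
  unfold huber
  split_ifs <;> linarith

theorem truncEnergy_mono_general {α : Type*} [BooleanAlgebra α]
    (μ ν : α → ℝ) (hμadd : IsAdditive μ) (hνadd : IsAdditive ν)
    (K : ℝ) (hK : 0 < K)
    (C D : Finset α) (hC : IsPartition C) (hD : IsPartition D)
    (href : Refines C D)
    (hμposD : ∀ σ ∈ D, 0 < μ σ)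
    (hcut : C.filter (fun σ => K < |ν σ / μ σ|) ⊆ D) :
    truncEnergy μ ν K C ≤ truncEnergy μ ν K D := by
  have hD_ne_bot : ∀ σ ∈ D, σ ≠ ⊥ := fun σ hσ h => (hμposD σ hσ).ne' (h ▸ hμadd.1)
  have hperspective : ∑ τ ∈ C, μ τ * huber K (ν τ / μ τ)
      ≤ ∑ σ ∈ D, μ σ * huber K (ν σ / μ σ) := by
    rw [href.sum_eq_sum_sum_filter_le hC hD_ne_bot]
    refine Finset.sum_le_sum fun τ hτ => ?_
    have hfiber : IsPartition (D.filter (· ≤ τ)) := hD.subset (Finset.filter_subset _ _)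
    have hμτ := hμadd.map_sup_eq_sum hfiber
    have hντ := hνadd.map_sup_eq_sum hfiber
    rw [href.sup_filter_le hC hτ] at hμτ hντ
    rw [hμτ, hντ]
    exact sum_mul_huber_div_sum_le hK.le _ μ ν fun σ hσ => hμposD σ (Finset.mem_filter.1 hσ).1
  have hhigh : ∑ σ ∈ C.filter (fun σ => K < |ν σ / μ σ|), μ σ
      ≤ ∑ σ ∈ D.filter (fun σ => K < |ν σ / μ σ|), μ σ :=
    Finset.sum_le_sum_of_subset_of_nonneg
      (fun σ hσ => Finset.mem_filter.2 ⟨hcut hσ, (Finset.mem_filter.1 hσ).2⟩)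
      (fun σ hσ _ => (hμposD σ (Finset.mem_filter.1 hσ).1).le)
  rw [truncEnergy_eq_sum_mul_huber_add, truncEnergy_eq_sum_mul_huber_add]
  gcongr

/-- the truncated energy is monotone under refinements which keep
    the high-density elements: if 𝒞 ⪯ 𝒟 and 𝒞_{ν>K} ⊆ 𝒟 then θ(𝒞) ≤ θ(𝒟). -/
theorem truncEnergy_mono {α : Type*} [BooleanAlgebra α]
    (μ ν : α → ℝ) (hμadd : IsAdditive μ) (hνadd : IsAdditive ν)
    (hμ01 : ∀ σ, 0 ≤ μ σ ∧ μ σ ≤ 1) (hμtop : μ ⊤ = 1)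
    (K : ℝ) (hK : 0 < K)
    (C D : Finset α) (hC : IsPartition C) (hD : IsPartition D)
    (href : Refines C D)
    (hμposC : ∀ σ ∈ C, 0 < μ σ) (hμposD : ∀ σ ∈ D, 0 < μ σ)
    (hcut : C.filter (fun σ => K < |ν σ / μ σ|) ⊆ D) :
    truncEnergy μ ν K C ≤ truncEnergy μ ν K D :=
  truncEnergy_mono_general μ ν hμadd hνadd K hK C D hC hD href hμposD hcut
end

section
/- Let σ ∈ Σ with |δ_ν(σ)| ≤ K and let 𝒟 be a partition refining {σ}. Let 𝒟* = {τ ∈ 𝒟 : |δ_ν(τ) − δ_ν(σ)| ≥ 1/E and |δ_ν(τ)| ≤ K}. Then for the truncated energy θ, θ(𝒟) ≥ θ({σ}) + μ(𝒟*)/E², i.e. θ(𝒟) ≥ μ(σ)δ_ν(σ)² + μ(𝒟*)/E². -/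
/-!
The truncated energy of a cell with mass `m` and density `x` is `m φ(x)`, where
`φ(x) = x²` for `|x| ≤ K` and `φ(x) = 2K|x|` otherwise. Since `|d| ≤ K`, the tangent line
`2dx - d²` of `x²` at `d` lies below `φ`, and for `|x| ≤ K` it lies below `x²` with slack
`(x - d)² ≥ 1/E²` on the cells of `𝒟*`. Summing the tangent line against the masses of the cells
of `𝒟` gives `μ(σ) d²` by additivity, because the densities average to `d = δ_ν(σ)`.
-/

open scoped Classical

open Finset

theorem IsAdditive.map_sup_eq_sum_s10 {α : Type*} [BooleanAlgebra α] {f : α → ℝ}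
    (hf : IsAdditive f) {D : Finset α} (hD : IsPartition D) :
    f (D.sup id) = ∑ τ ∈ D, f τ := by
  induction D using Finset.induction_on with
  | empty => simpa using hf.1
  | @insert a s ha ih =>
    have hs : IsPartition s := fun x hx y hy hxy =>
      hD x (mem_insert_of_mem hx) y (mem_insert_of_mem hy) hxy
    have hdisj : a ⊓ s.sup id = ⊥ := by
      refine disjoint_iff.mp (Finset.disjoint_sup_right.mpr fun i hi => disjoint_iff.mpr ?_)
      exact hD a (mem_insert_self a s) i (mem_insert_of_mem hi) (by rintro rfl; exact ha hi)
    rw [sup_insert, sum_insert ha, id_eq, hf.2, hdisj, hf.1, ih hs, sub_zero]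

noncomputable def cellEnergy (K m x : ℝ) : ℝ :=
  if |x| ≤ K then m * x ^ 2 else 2 * K * (m * |x|)

theorem truncEnergy_eq_sum_cellEnergy {α : Type*} [BooleanAlgebra α] (μ ν : α → ℝ) (K : ℝ)
    (C : Finset α) : truncEnergy μ ν K C = ∑ τ ∈ C, cellEnergy K (μ τ) (ν τ / μ τ) := by
  simp only [cellEnergy, sum_ite, truncEnergy, mul_sum, not_le]

section Tangent

variable {K E m x d : ℝ}

theorem tangent_le_cellEnergy (hm : 0 ≤ m) (hd : |d| ≤ K) :
    m * (2 * d * x - d ^ 2) ≤ cellEnergy K m x := by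
  unfold cellEnergy
  split_ifs with hx
  · nlinarith [mul_nonneg hm (sq_nonneg (x - d))]
  · have hdx : d * x ≤ K * |x| :=
      (le_abs_self _).trans (abs_mul d x ▸ mul_le_mul_of_nonneg_right hd (abs_nonneg x))
    nlinarith [mul_le_mul_of_nonneg_left hdx hm, mul_nonneg hm (sq_nonneg d)]

theorem tangent_add_le_cellEnergy (hm : 0 ≤ m) (hE : 0 < E) (hx : |x| ≤ K)
    (hxd : 1 / E ≤ |x - d|) : m * (2 * d * x - d ^ 2) + m / E ^ 2 ≤ cellEnergy K m x := by
  have hslack : 1 / E ^ 2 ≤ (x - d) ^ 2 := by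
    rw [← sq_abs (x - d), ← one_div_pow]
    exact pow_le_pow_left₀ (by positivity) hxd 2
  rw [cellEnergy, if_pos hx, ← mul_one_div]
  nlinarith [mul_le_mul_of_nonneg_left hslack hm]

theorem tangent_add_indicator_le_cellEnergy (hm : 0 ≤ m) (hE : 0 < E) (hd : |d| ≤ K) :
    m * (2 * d * x - d ^ 2) + (if 1 / E ≤ |x - d| ∧ |x| ≤ K then m / E ^ 2 else 0)
      ≤ cellEnergy K m x := by
  split_ifs with h
  · exact tangent_add_le_cellEnergy hm hE h.2 h.1
  · simpa using tangent_le_cellEnergy hm hd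

end Tangent

theorem sum_mul_tangent_eq {ι : Type*} (s : Finset ι) (m v : ι → ℝ) (hm : ∀ i ∈ s, m i ≠ 0)
    (d : ℝ) :
    ∑ i ∈ s, m i * (2 * d * (v i / m i) - d ^ 2) = 2 * d * ∑ i ∈ s, v i - d ^ 2 * ∑ i ∈ s, m i := by
  rw [mul_sum, mul_sum, ← sum_sub_distrib]
  refine sum_congr rfl fun i hi => ?_
  field_simp [hm i hi]

theorem truncEnergy_increment_single_general {α : Type*} [BooleanAlgebra α]
    (μ ν : α → ℝ) (hμadd : IsAdditive μ) (hνadd : IsAdditive ν)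
    (K E : ℝ) (hE : 0 < E)
    (σ : α) (hδσ : |ν σ / μ σ| ≤ K)
    (D : Finset α) (hD : IsPartition D) (href : Refines {σ} D)
    (hμposD : ∀ τ ∈ D, 0 < μ τ) :
    μ σ * (ν σ / μ σ) ^ 2
      + (∑ τ ∈ D.filter (fun τ =>
          1 / E ≤ |ν τ / μ τ - ν σ / μ σ| ∧ |ν τ / μ τ| ≤ K), μ τ) / E ^ 2
      ≤ truncEnergy μ ν K D := by
  set d := ν σ / μ σ
  have hsup : D.sup id = σ := by simpa using href.1
  have hμsum : ∑ τ ∈ D, μ τ = μ σ := hsup ▸ (hμadd.map_sup_eq_sum_s10 hD).symm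
  have hνsum : ∑ τ ∈ D, ν τ = ν σ := hsup ▸ (hνadd.map_sup_eq_sum_s10 hD).symm
  -- `ν σ * d = μ σ * d ^ 2` holds also when `μ σ = 0`, as then `d = 0`
  have htangent : 2 * d * ν σ - d ^ 2 * μ σ = μ σ * d ^ 2 := by
    rcases eq_or_ne (μ σ) 0 with h | h
    · simp [d, h]
    · simp only [d]
      field_simp
      ring
  calc μ σ * d ^ 2 + (∑ τ ∈ D.filter (fun τ =>
          1 / E ≤ |ν τ / μ τ - d| ∧ |ν τ / μ τ| ≤ K), μ τ) / E ^ 2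
      = ∑ τ ∈ D, (μ τ * (2 * d * (ν τ / μ τ) - d ^ 2)
          + if 1 / E ≤ |ν τ / μ τ - d| ∧ |ν τ / μ τ| ≤ K then μ τ / E ^ 2 else 0) := by
        rw [sum_add_distrib, sum_mul_tangent_eq D μ ν (fun τ hτ => (hμposD τ hτ).ne'),
          hμsum, hνsum, htangent, sum_div, sum_filter]
    _ ≤ ∑ τ ∈ D, cellEnergy K (μ τ) (ν τ / μ τ) :=
        sum_le_sum fun τ hτ => tangent_add_indicator_le_cellEnergy (hμposD τ hτ).le hE hδσ
    _ = truncEnergy μ ν K D := (truncEnergy_eq_sum_cellEnergy μ ν K D).symm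

/-- energy increment on one cell: refining a single set of
    bounded density increases the truncated energy by at least μ(𝒟*)/E². -/
theorem truncEnergy_increment_single {α : Type*} [BooleanAlgebra α]
    (μ ν : α → ℝ) (hμadd : IsAdditive μ) (hνadd : IsAdditive ν)
    (hμ01 : ∀ τ, 0 ≤ μ τ ∧ μ τ ≤ 1) (hμtop : μ ⊤ = 1)
    (K E : ℝ) (hK : 0 < K) (hE : 0 < E)
    (σ : α) (hμσ : 0 < μ σ) (hδσ : |ν σ / μ σ| ≤ K)
    (D : Finset α) (hD : IsPartition D) (href : Refines {σ} D)
    (hμposD : ∀ τ ∈ D, 0 < μ τ) :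
    μ σ * (ν σ / μ σ) ^ 2
      + (∑ τ ∈ D.filter (fun τ =>
          1 / E ≤ |ν τ / μ τ - ν σ / μ σ| ∧ |ν τ / μ τ| ≤ K), μ τ) / E ^ 2
      ≤ truncEnergy μ ν K D :=
  truncEnergy_increment_single_general μ ν hμadd hνadd K E hE σ hδσ D hD href hμposD
end

section
/- If 𝒞 ⪯ 𝒟 are partitions, 𝒞_{ν>K} ⊆ 𝒟, every σ ∈ 𝒞 \ 𝒞_{ν>K} satisfies |δ_ν(σ)| ≤ K with K = max{2D·‖ν‖_{L¹}, 1}, and μ(𝔇_{E,𝒞,ν}(𝒟)) ≥ 1/D where 𝔇_{E,𝒞,ν}(𝒟) = {σ ∈ 𝒟 : |δ_ν(σ) − δ_ν(σ_𝒞)| ≥ 1/E}, then θ(𝒟) ≥ θ(𝒞) + 1/(2DE²). -/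
open scoped Classical

theorem sum_of_additive {α : Type*} [BooleanAlgebra α] {m : α → ℝ}
    (hm : IsAdditive m) :
    ∀ (A : Finset α), IsPartition A → m (A.sup id) = ∑ σ ∈ A, m σ := by
  intro A
  classical
  induction A using Finset.induction_on with
  | empty => intro _; simp [hm.1]
  | @insert a A ha ih =>
    intro hpart
    have hdisj : a ⊓ A.sup id = ⊥ := by
      have : Disjoint a (A.sup id) := by
        rw [Finset.disjoint_sup_right]
        intro σ hσ
        have hne : a ≠ σ := fun h => ha (h ▸ hσ)
        exact disjoint_iff.2 (hpart a (Finset.mem_insert_self _ _) σ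
          (Finset.mem_insert_of_mem hσ) hne)
      exact disjoint_iff.1 this
    have hsub : IsPartition A := fun σ hσ τ hτ h =>
      hpart σ (Finset.mem_insert_of_mem hσ) τ (Finset.mem_insert_of_mem hτ) h
    rw [Finset.sup_insert, hm.2]
    simp only [id]
    rw [hdisj, hm.1, Finset.sum_insert ha, ih hsub]
    ring

/-- energy increment: if the set 𝔇_{E,𝒞,ν}(𝒟) of elements of
    𝒟 whose ν-density differs from that of their 𝒞-cell by at least 1/E has
    μ-measure at least 1/D, then θ(𝒟) ≥ θ(𝒞) + 1/(2DE²), where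
    K = max{2D‖ν‖_{L¹}, 1}. -/
theorem truncEnergy_increment {α : Type*} [BooleanAlgebra α]
    (μ ν : α → ℝ) (hμadd : IsAdditive μ) (hνadd : IsAdditive ν)
    (hμ01 : ∀ σ, 0 ≤ μ σ ∧ μ σ ≤ 1) (hμtop : μ ⊤ = 1)
    (N : ℝ) (hN : ∀ A : Finset α, IsPartition A → (∑ σ ∈ A, |ν σ|) ≤ N)
    (Dc E : ℝ) (hDc : 0 < Dc) (hE : 0 < E)
    (C D : Finset α) (hC : IsPartition C) (hD : IsPartition D)
    (href : Refines C D)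
    (hμposC : ∀ σ ∈ C, 0 < μ σ) (hμposD : ∀ σ ∈ D, 0 < μ σ)
    (hcut : C.filter (fun σ => max (2 * Dc * N) 1 < |ν σ / μ σ|) ⊆ D)
    (hbig : 1 / Dc ≤ ∑ σ ∈ D.filter (fun σ =>
      ∃ τ ∈ C, σ ≤ τ ∧ 1 / E ≤ |ν σ / μ σ - ν τ / μ τ|), μ σ) :
    truncEnergy μ ν (max (2 * Dc * N) 1) C + 1 / (2 * Dc * E ^ 2)
      ≤ truncEnergy μ ν (max (2 * Dc * N) 1) D := by
  classical
  set K : ℝ := max (2 * Dc * N) 1 with hKdef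
  have hK1 : (1:ℝ) ≤ K := le_max_right _ _
  have hKpos : (0:ℝ) < K := lt_of_lt_of_le one_pos hK1
  have hKN : 2 * Dc * N ≤ K := le_max_left _ _
  set d : α → ℝ := fun σ => ν σ / μ σ with hddef
  set G : α → ℝ := fun σ => if |d σ| ≤ K then μ σ * d σ ^ 2
    else 2 * K * (μ σ * |d σ|) with hGdef
  -- truncEnergy as a single sum
  have hθ : ∀ A : Finset α, truncEnergy μ ν K A = ∑ σ ∈ A, G σ := by
    intro A
    unfold truncEnergy
    rw [Finset.mul_sum, Finset.sum_filter, Finset.sum_filter,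
      ← Finset.sum_add_distrib]
    apply Finset.sum_congr rfl
    intro σ _
    by_cases h : |ν σ / μ σ| ≤ K
    · simp [hGdef, hddef, h, not_lt.2 h]
    · simp [hGdef, hddef, h, not_le.1 h]
  -- bottom has measure zero
  have hμbot : μ ⊥ = 0 := hμadd.1
  -- uniqueness of parents
  have huniq : ∀ σ ∈ D, ∀ τ ∈ C, ∀ τ' ∈ C, σ ≤ τ → σ ≤ τ' → τ = τ' := by
    intro σ hσ τ hτ τ' hτ' h1 h2
    by_contra hne
    have hle : σ ≤ τ ⊓ τ' := le_inf h1 h2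
    rw [hC τ hτ τ' hτ' hne, le_bot_iff] at hle
    have := hμposD σ hσ
    rw [hle, hμbot] at this
    exact lt_irrefl 0 this
  -- parent function
  set p : α → α := fun σ => if h : ∃ τ ∈ C, σ ≤ τ then h.choose else ⊥ with hpdef
  have hp : ∀ σ ∈ D, p σ ∈ C ∧ σ ≤ p σ := by
    intro σ hσ
    obtain ⟨τ, hτ, hle⟩ := href.2 σ hσ
    have hex : ∃ τ ∈ C, σ ≤ τ := ⟨τ, hτ, hle⟩
    simp only [hpdef, dif_pos hex]
    exact ⟨hex.choose_spec.1, hex.choose_spec.2⟩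
  have hpu : ∀ σ ∈ D, ∀ τ ∈ C, σ ≤ τ → p σ = τ := by
    intro σ hσ τ hτ hle
    exact huniq σ hσ (p σ) (hp σ hσ).1 τ hτ (hp σ hσ).2 hle
  -- children
  set ch : α → Finset α := fun τ => D.filter (fun σ => p σ = τ) with hchdef
  have hchD : ∀ τ, ch τ ⊆ D := fun τ => Finset.filter_subset _ _
  have hchle : ∀ τ, ∀ σ ∈ ch τ, σ ≤ τ := by
    intro τ σ hσ
    rw [hchdef, Finset.mem_filter] at hσ
    exact hσ.2 ▸ (hp σ hσ.1).2
  have hchpart : ∀ τ, IsPartition (ch τ) := by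
    intro τ σ hσ σ' hσ' hne
    exact hD σ (hchD τ hσ) σ' (hchD τ hσ') hne
  -- for τ ∈ C : τ is the sup of its children
  have hsup : ∀ τ ∈ C, (ch τ).sup id = τ := by
    intro τ hτ
    apply le_antisymm
    · exact Finset.sup_le (fun σ hσ => hchle τ σ hσ)
    · have h1 : τ ≤ D.sup id := by
        rw [href.1]; exact Finset.le_sup (f := id) hτ
      have h2 : τ = τ ⊓ D.sup id := (inf_eq_left.2 h1).symm
      have h3 : τ ⊓ D.sup id = D.sup (fun σ => τ ⊓ id σ) :=
        Finset.sup_inf_distrib_left D id τ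
      have h4 : D.sup (fun σ => τ ⊓ id σ) ≤ (ch τ).sup id := by
        apply Finset.sup_le
        intro σ hσ
        by_cases hc : σ ∈ ch τ
        · exact le_trans inf_le_right (Finset.le_sup (f := id) hc)
        · have hne : p σ ≠ τ := fun h => hc (Finset.mem_filter.2 ⟨hσ, h⟩)
          have h5 : τ ⊓ id σ ≤ τ ⊓ p σ := inf_le_inf_left τ (hp σ hσ).2
          rw [inf_comm τ (p σ), hC (p σ) (hp σ hσ).1 τ hτ hne] at h5
          exact le_trans h5 bot_le
      exact le_of_eq (h2.trans h3) |>.trans h4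
  -- additivity over children
  have hμch : ∀ τ ∈ C, μ τ = ∑ σ ∈ ch τ, μ σ := by
    intro τ hτ
    have h := sum_of_additive hμadd (ch τ) (hchpart τ)
    rwa [hsup τ hτ] at h
  have hνch : ∀ τ ∈ C, ν τ = ∑ σ ∈ ch τ, ν σ := by
    intro τ hτ
    have h := sum_of_additive hνadd (ch τ) (hchpart τ)
    rwa [hsup τ hτ] at h
  -- deviant measure under each cell
  set m : α → ℝ := fun τ => ∑ σ ∈ (ch τ).filter
    (fun σ => |d σ| ≤ K ∧ 1 / E ≤ |d σ - d τ|), μ σ with hmdef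
  have hmnonneg : ∀ τ, 0 ≤ m τ :=
    fun τ => Finset.sum_nonneg (fun σ _ => (hμ01 σ).1)
  have hEinv : 0 < 1 / E := by positivity
  -- per-cell energy inequality
  have hkey : ∀ τ ∈ C, G τ + (1 / E ^ 2) * m τ ≤ ∑ σ ∈ ch τ, G σ := by
    intro τ hτ
    by_cases hgood : |d τ| ≤ K
    · -- good cell
      have hμτ : 0 < μ τ := hμposC τ hτ
      have hντ : ν τ = μ τ * d τ := by
        simp only [hddef]
        field_simp
      have hsumν : ∑ σ ∈ ch τ, μ σ * d σ = ν τ := by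
        rw [hνch τ hτ]
        apply Finset.sum_congr rfl
        intro σ hσ
        have hμσ : 0 < μ σ := hμposD σ (hchD τ hσ)
        simp only [hddef]
        field_simp
      have hptwise : ∀ σ ∈ ch τ,
          μ σ * (2 * d τ * d σ - d τ ^ 2)
            + (if |d σ| ≤ K ∧ 1 / E ≤ |d σ - d τ| then μ σ * (1 / E ^ 2) else 0)
          ≤ G σ := by
        intro σ hσ
        have hμσ : 0 < μ σ := hμposD σ (hchD τ hσ)
        by_cases hgσ : |d σ| ≤ K
        · simp only [hGdef, if_pos hgσ]
          by_cases hdev : 1 / E ≤ |d σ - d τ|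
          · rw [if_pos ⟨hgσ, hdev⟩]
            have h1 : (1 / E) ^ 2 ≤ (d σ - d τ) ^ 2 := by
              rw [← sq_abs (d σ - d τ)]
              exact pow_le_pow_left₀ hEinv.le hdev 2
            have h2 : μ σ * ((1 / E) ^ 2) ≤ μ σ * (d σ - d τ) ^ 2 :=
              mul_le_mul_of_nonneg_left h1 hμσ.le
            have h3 : (1 / E) ^ 2 = 1 / E ^ 2 := by
              rw [div_pow, one_pow]
            nlinarith [h2]
          · rw [if_neg (fun h => hdev h.2)]
            nlinarith [mul_le_mul_of_nonneg_left (sq_nonneg (d σ - d τ)) hμσ.le]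
        · simp only [hGdef, if_neg hgσ]
          rw [if_neg (fun h => hgσ h.1)]
          have h1 : d τ * d σ ≤ K * |d σ| := by
            calc d τ * d σ ≤ |d τ * d σ| := le_abs_self _
              _ = |d τ| * |d σ| := abs_mul _ _
              _ ≤ K * |d σ| := mul_le_mul_of_nonneg_right hgood (abs_nonneg _)
          nlinarith [mul_le_mul_of_nonneg_left h1 hμσ.le,
            mul_nonneg hμσ.le (sq_nonneg (d τ))]
      have hsum := Finset.sum_le_sum hptwise
      have hGτ : G τ = μ τ * d τ ^ 2 := by simp only [hGdef, if_pos hgood]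
      have hL : ∑ σ ∈ ch τ, (μ σ * (2 * d τ * d σ - d τ ^ 2)
          + if |d σ| ≤ K ∧ 1 / E ≤ |d σ - d τ| then μ σ * (1 / E ^ 2) else 0)
          = G τ + (1 / E ^ 2) * m τ := by
        rw [Finset.sum_add_distrib]
        congr 1
        · have h5 : ∑ σ ∈ ch τ, μ σ * (2 * d τ * d σ - d τ ^ 2)
              = 2 * d τ * (∑ σ ∈ ch τ, μ σ * d σ)
                - d τ ^ 2 * ∑ σ ∈ ch τ, μ σ := by
            rw [Finset.mul_sum, Finset.mul_sum, ← Finset.sum_sub_distrib]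
            exact Finset.sum_congr rfl (fun σ _ => by ring)
          rw [h5, hsumν, ← hμch τ hτ, hντ, hGτ]
          ring
        · have hfil := Finset.sum_filter
            (s := ch τ) (fun σ => |d σ| ≤ K ∧ 1 / E ≤ |d σ - d τ|) μ
          simp only [hmdef]
          rw [hfil, Finset.mul_sum]
          apply Finset.sum_congr rfl
          intro σ _
          by_cases h : |d σ| ≤ K ∧ 1 / E ≤ |d σ - d τ|
          · rw [if_pos h, if_pos h]; ring
          · rw [if_neg h, if_neg h, mul_zero]
      rw [hL] at hsum
      exact hsum
    · -- bad cell: it survives untouched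
      have hτD : τ ∈ D := hcut (Finset.mem_filter.2 ⟨hτ, not_le.1 hgood⟩)
      have hchτ : ch τ = {τ} := by
        apply Finset.eq_singleton_iff_unique_mem.2
        refine ⟨Finset.mem_filter.2 ⟨hτD, hpu τ hτD τ hτ le_rfl⟩, ?_⟩
        intro σ hσ
        by_contra hne
        have h := hD σ (hchD τ hσ) τ hτD hne
        have hσbot : σ = ⊥ := by
          rw [← h]
          exact (inf_eq_left.2 (hchle τ σ hσ)).symm
        have hpos := hμposD σ (hchD τ hσ)
        rw [hσbot, hμbot] at hpos
        exact lt_irrefl 0 hpos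
      have hm0 : m τ = 0 := by
        simp only [hmdef, hchτ]
        apply Finset.sum_eq_zero
        intro σ hσ
        rw [Finset.mem_filter, Finset.mem_singleton] at hσ
        exfalso
        obtain ⟨h1, _, h3⟩ := hσ
        rw [h1, sub_self, abs_zero] at h3
        exact absurd h3 (not_le.2 hEinv)
      rw [hm0, hchτ, Finset.sum_singleton, mul_zero, add_zero]
  -- fiberwise decomposition of sums over D
  have hfib : ∀ f : α → ℝ, ∑ σ ∈ D, f σ = ∑ τ ∈ C, ∑ σ ∈ ch τ, f σ := by
    intro f
    exact (Finset.sum_fiberwise_of_maps_to (fun σ hσ => (hp σ hσ).1) f).symm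
  -- total deviant (good) measure
  set Q : α → Prop := fun σ => |d σ| ≤ K ∧ 1 / E ≤ |d σ - d (p σ)| with hQdef
  have hmtot : ∑ τ ∈ C, m τ = ∑ σ ∈ D.filter Q, μ σ := by
    have hmap : ∀ σ ∈ D.filter Q, p σ ∈ C :=
      fun σ hσ => (hp σ (Finset.filter_subset _ _ hσ)).1
    rw [← Finset.sum_fiberwise_of_maps_to hmap μ]
    apply Finset.sum_congr rfl
    intro τ hτ
    simp only [hmdef]
    congr 1
    ext σ
    simp only [Finset.mem_filter, hchdef, hQdef]
    constructor
    · rintro ⟨⟨hσD, hpσ⟩, h1, h2⟩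
      exact ⟨⟨hσD, h1, by rwa [hpσ]⟩, hpσ⟩
    · rintro ⟨⟨hσD, h1, h2⟩, hpσ⟩
      exact ⟨⟨hσD, hpσ⟩, h1, by rwa [← hpσ]⟩
  -- the set with large density has small measure
  have hbad : ∑ σ ∈ D.filter (fun σ => ¬ |d σ| ≤ K), μ σ ≤ 1 / (2 * Dc) := by
    have h1 : K * ∑ σ ∈ D.filter (fun σ => ¬ |d σ| ≤ K), μ σ
        ≤ ∑ σ ∈ D.filter (fun σ => ¬ |d σ| ≤ K), |ν σ| := by
      rw [Finset.mul_sum]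
      apply Finset.sum_le_sum
      intro σ hσ
      rw [Finset.mem_filter] at hσ
      have hμσ : 0 < μ σ := hμposD σ hσ.1
      have h2 : K < |ν σ| / μ σ := by
        have := not_le.1 hσ.2
        rwa [hddef, abs_div, abs_of_pos hμσ] at this
      have h3 : K * μ σ ≤ (|ν σ| / μ σ) * μ σ :=
        mul_le_mul_of_nonneg_right h2.le hμσ.le
      rwa [div_mul_cancel₀ _ (ne_of_gt hμσ)] at h3
    have h4 : ∑ σ ∈ D.filter (fun σ => ¬ |d σ| ≤ K), |ν σ| ≤ ∑ σ ∈ D, |ν σ| :=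
      Finset.sum_le_sum_of_subset_of_nonneg (Finset.filter_subset _ _)
        (fun σ _ _ => abs_nonneg _)
    have h5 : K * ∑ σ ∈ D.filter (fun σ => ¬ |d σ| ≤ K), μ σ ≤ N :=
      le_trans h1 (le_trans h4 (hN D hD))
    have h6 : 0 ≤ ∑ σ ∈ D.filter (fun σ => ¬ |d σ| ≤ K), μ σ :=
      Finset.sum_nonneg (fun σ _ => (hμ01 σ).1)
    rw [le_div_iff₀ (by positivity)]
    nlinarith [mul_le_mul_of_nonneg_left h5 (le_of_lt hDc)]
  -- the deviant set of measure ≥ 1/Dc, split by good/bad density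
  have hdevsplit : 1 / Dc ≤ ∑ σ ∈ D.filter Q, μ σ + 1 / (2 * Dc) := by
    set P : α → Prop := fun σ =>
      ∃ τ ∈ C, σ ≤ τ ∧ 1 / E ≤ |ν σ / μ σ - ν τ / μ τ| with hPdef
    have hsplit := Finset.sum_filter_add_sum_filter_not (D.filter P)
      (fun σ => |d σ| ≤ K) μ
    have hsub1 : (D.filter P).filter (fun σ => |d σ| ≤ K) ⊆ D.filter Q := by
      intro σ hσ
      simp only [Finset.mem_filter, hPdef] at hσ
      obtain ⟨⟨hσD, τ, hτ, hle, hdev⟩, hgσ⟩ := hσ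
      have hpσ : p σ = τ := hpu σ hσD τ hτ hle
      refine Finset.mem_filter.2 ⟨hσD, hgσ, ?_⟩
      rw [hpσ]
      exact hdev
    have hsub2 : (D.filter P).filter (fun σ => ¬ |d σ| ≤ K)
        ⊆ D.filter (fun σ => ¬ |d σ| ≤ K) :=
      Finset.filter_subset_filter _ (Finset.filter_subset _ _)
    have hle1 : ∑ σ ∈ (D.filter P).filter (fun σ => |d σ| ≤ K), μ σ
        ≤ ∑ σ ∈ D.filter Q, μ σ :=
      Finset.sum_le_sum_of_subset_of_nonneg hsub1 (fun σ _ _ => (hμ01 σ).1)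
    have hle2 : ∑ σ ∈ (D.filter P).filter (fun σ => ¬ |d σ| ≤ K), μ σ
        ≤ 1 / (2 * Dc) :=
      le_trans (Finset.sum_le_sum_of_subset_of_nonneg hsub2
        (fun σ _ _ => (hμ01 σ).1)) hbad
    calc 1 / Dc ≤ ∑ σ ∈ D.filter P, μ σ := hbig
      _ = ∑ σ ∈ (D.filter P).filter (fun σ => |d σ| ≤ K), μ σ
          + ∑ σ ∈ (D.filter P).filter (fun σ => ¬ |d σ| ≤ K), μ σ := hsplit.symm
      _ ≤ ∑ σ ∈ D.filter Q, μ σ + 1 / (2 * Dc) := add_le_add hle1 hle2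
  have hmbig : 1 / (2 * Dc) ≤ ∑ τ ∈ C, m τ := by
    rw [hmtot]
    have : 1 / Dc - 1 / (2 * Dc) = 1 / (2 * Dc) := by
      field_simp
      ring
    linarith [hdevsplit]
  -- assemble
  rw [hθ C, hθ D, hfib G]
  have hstep : ∑ τ ∈ C, (G τ + (1 / E ^ 2) * m τ) ≤ ∑ τ ∈ C, ∑ σ ∈ ch τ, G σ :=
    Finset.sum_le_sum hkey
  rw [Finset.sum_add_distrib, ← Finset.mul_sum] at hstep
  have hfinal : 1 / (2 * Dc * E ^ 2) ≤ (1 / E ^ 2) * ∑ τ ∈ C, m τ := by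
    have h7 : (1 / E ^ 2) * (1 / (2 * Dc)) ≤ (1 / E ^ 2) * ∑ τ ∈ C, m τ :=
      mul_le_mul_of_nonneg_left hmbig (by positivity)
    have h8 : (1 / E ^ 2) * (1 / (2 * Dc)) = 1 / (2 * Dc * E ^ 2) := by
      field_simp
    linarith
  linarith
end

section
/- Suppose ρ is E-constant on ℬ' \ ℬ⁻ (i.e., for every σ ∈ ℬ' \ ℬ⁻ and every additive λ, |(ρλ)(σ) − (ρ∗λ)(σ)| < |λ(σ)|/E), ‖ρ‖_{L¹}, ‖λ‖_{L¹} ≤ B, and ℬ ⪯ ℬ'. Then for any C > 0, Σ over σ ∈ ℬ with |δ_λ(σ)| ≤ C of |(ρλ)(σ) − (ρ∗λ)(σ)| is less than 2B/E + C·|ρ|(𝔇_{E,ℬ,λ}(ℬ') ∪ ℬ⁻) + |ρλ|(𝔇_{E,ℬ,λ}(ℬ') ∪ ℬ⁻). -/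
open scoped Classical

/-!
Each `σ ∈ ℬ` is the join of its children in `ℬ'`, so by additivity
`(ρλ)(σ) - (ρ∗λ)(σ) = ∑_τ ((ρλ)(τ) - ρ(τ) δ_λ(σ))`. On a child outside `𝔇 ∪ ℬ⁻`, E-constancy and
`|δ_λ(τ) - δ_λ(σ)| < 1/E` bound the term strictly by `(|λ(τ)| + |ρ(τ)|)/E`; on any other child it
is at most `|(ρλ)(τ)| + C |ρ(τ)|`. Distinct elements of `ℬ` have disjoint sets of children, so
summing over `σ` costs at most `(‖λ‖ + ‖ρ‖)/E ≤ 2B/E` for the good children and the two sums over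
`𝔇 ∪ ℬ⁻` for the bad ones.
-/
theorem Finset.sum_sum_lt_of_forall_lt {ι κ : Type*} {s : Finset ι} {t : ι → Finset κ}
    {f g : ι → κ → ℝ} {M : ℝ} (hM : 0 < M) (hfg : ∀ i ∈ s, ∀ j ∈ t i, f i j < g i j)
    (hg : ∑ i ∈ s, ∑ j ∈ t i, g i j ≤ M) :
    ∑ i ∈ s, ∑ j ∈ t i, f i j < M := by
  rw [Finset.sum_sigma'] at hg ⊢
  rcases (s.sigma t).eq_empty_or_nonempty with hempty | hne
  · simpa [hempty] using hM
  · exact (Finset.sum_lt_sum_of_nonempty hne fun x hx =>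
      hfg x.1 (Finset.mem_sigma.1 hx).1 x.2 (Finset.mem_sigma.1 hx).2).trans_le hg

theorem Finset.sum_sum_le_sum_of_pairwiseDisjoint {ι κ : Type*} [DecidableEq κ]
    {s : Finset ι} {t : ι → Finset κ} {S : Finset κ} (ht : (s : Set ι).PairwiseDisjoint t)
    (htS : ∀ i ∈ s, t i ⊆ S) {g : κ → ℝ} (hg : ∀ j, 0 ≤ g j) :
    ∑ i ∈ s, ∑ j ∈ t i, g j ≤ ∑ j ∈ S, g j := by
  rw [← Finset.sum_biUnion ht]
  exact Finset.sum_le_sum_of_subset_of_nonneg (Finset.biUnion_subset.2 htS)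
    fun j _ _ => hg j

theorem Finset.sum_sum_lt_two_mul_div {ι κ : Type*} [DecidableEq κ] {s : Finset ι}
    {t : ι → Finset κ} {S : Finset κ} (ht : (s : Set ι).PairwiseDisjoint t)
    (htS : ∀ i ∈ s, t i ⊆ S) {f : ι → κ → ℝ} {u v : κ → ℝ} {M E : ℝ} (hM : 0 < M) (hE : 0 < E)
    (hu : ∑ j ∈ S, |u j| ≤ M) (hv : ∑ j ∈ S, |v j| ≤ M)
    (hf : ∀ i ∈ s, ∀ j ∈ t i, f i j < (|u j| + |v j|) / E) :
    ∑ i ∈ s, ∑ j ∈ t i, f i j < 2 * M / E := by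
  refine Finset.sum_sum_lt_of_forall_lt (by positivity) hf
    ((Finset.sum_sum_le_sum_of_pairwiseDisjoint ht htS fun j => by positivity).trans ?_)
  rw [← Finset.sum_div, Finset.sum_add_distrib, two_mul]
  gcongr

theorem abs_sub_mul_lt_of_abs_sub_le {p r a b x y : ℝ} (h : |p - r * a| < x)
    (hab : |a - b| ≤ y) : |p - r * b| < x + |r| * y :=
  calc |p - r * b| = |(p - r * a) + r * (a - b)| := by congr 1; ring
    _ ≤ |p - r * a| + |r| * |a - b| := by rw [← abs_mul]; exact abs_add_le _ _
    _ < x + |r| * y := add_lt_add_of_lt_of_le h (mul_le_mul_of_nonneg_left hab (abs_nonneg r))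

theorem abs_sub_mul_le_of_abs_le {p r b C : ℝ} (hb : |b| ≤ C) :
    |p - r * b| ≤ |p| + C * |r| :=
  calc |p - r * b| ≤ |p| + |r| * |b| := by rw [← abs_mul]; exact abs_sub _ _
    _ ≤ |p| + C * |r| := by rw [mul_comm C]; gcongr

section Partition

variable {α : Type*} [BooleanAlgebra α]

theorem IsPartition.mono {A A' : Finset α} (hA : IsPartition A) (h : A' ⊆ A) :
    IsPartition A' :=
  fun σ hσ τ hτ => hA σ (h hσ) τ (h hτ)

theorem IsAdditive.apply_sup_eq_sum [DecidableEq α] {ν : α → ℝ} (hν : IsAdditive ν)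
    {S : Finset α} (hS : IsPartition S) : ν (S.sup id) = ∑ τ ∈ S, ν τ := by
  induction S using Finset.induction_on with
  | empty => simpa using hν.1
  | @insert a s ha ih =>
    have hdisj : a ⊓ s.sup id = ⊥ := by
      rw [Finset.sup_inf_distrib_left, Finset.sup_eq_bot_iff]
      exact fun t ht => hS a (Finset.mem_insert_self a s) t (Finset.mem_insert_of_mem ht)
        fun h => ha (h ▸ ht)
    rw [Finset.sup_insert, Finset.sum_insert ha, id, hν.2, hdisj, hν.1,
      ih (hS.mono (Finset.subset_insert a s)), sub_zero]

noncomputable def children (B' : Finset α) (σ : α) : Finset α :=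
  B'.filter (· ≤ σ)

theorem children_subset (B' : Finset α) (σ : α) : children B' σ ⊆ B' :=
  Finset.filter_subset _ _

theorem sup_children {B B' : Finset α} (hB : IsPartition B) (href : Refines B B')
    {σ : α} (hσ : σ ∈ B) : (children B' σ).sup id = σ := by
  refine le_antisymm (Finset.sup_le fun τ hτ => (Finset.mem_filter.1 hτ).2) ?_
  have hσ' : σ = σ ⊓ B'.sup id :=
    (inf_eq_left.2 (href.1 ▸ Finset.le_sup (f := id) hσ)).symm
  conv_lhs => rw [hσ', Finset.sup_inf_distrib_left]
  refine Finset.sup_le fun τ hτ => ?_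
  by_cases hle : τ ≤ σ
  · exact inf_le_right.trans (Finset.le_sup (f := id) (Finset.mem_filter.2 ⟨hτ, hle⟩))
  · obtain ⟨σ', hσ', hτσ'⟩ := href.2 τ hτ
    calc σ ⊓ id τ ≤ σ ⊓ σ' := inf_le_inf_left σ hτσ'
      _ = ⊥ := hB σ hσ σ' hσ' fun h => hle (h ▸ hτσ')
      _ ≤ _ := bot_le

theorem IsAdditive.apply_eq_sum_children [DecidableEq α] {ν : α → ℝ} (hν : IsAdditive ν)
    {B B' : Finset α} (hB : IsPartition B) (hB' : IsPartition B') (href : Refines B B')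
    {σ : α} (hσ : σ ∈ B) : ν σ = ∑ τ ∈ children B' σ, ν τ := by
  rw [← hν.apply_sup_eq_sum (hB'.mono (children_subset B' σ)), sup_children hB href hσ]

theorem IsPartition.pairwiseDisjoint_children {B B' : Finset α} (hB : IsPartition B)
    (hB'bot : ∀ τ ∈ B', τ ≠ ⊥) : (B : Set α).PairwiseDisjoint (children B') := by
  intro σ hσ σ' hσ' hne
  refine Finset.disjoint_left.2 fun τ hτ hτ' => ?_
  obtain ⟨hτB', hτσ⟩ := Finset.mem_filter.1 hτ
  refine hB'bot τ hτB' (le_bot_iff.1 ?_)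
  rw [← hB σ hσ σ' hσ' hne]
  exact le_inf hτσ (Finset.mem_filter.1 hτ').2

end Partition

theorem abs_sub_local_product_le {α : Type*} [BooleanAlgebra α] [DecidableEq α]
    {μ ρ lam pl : α → ℝ} (hρ : IsAdditive ρ) (hpl : IsAdditive pl) {B B' : Finset α}
    (hB : IsPartition B) (hB' : IsPartition B') (href : Refines B B') (Bad : Finset α)
    {C : ℝ} {σ : α} (hσ : σ ∈ B) (hσC : |lam σ / μ σ| ≤ C) :
    |pl σ - ρ σ * lam σ / μ σ| ≤
      ∑ τ ∈ children B' σ ∩ Bad, (|pl τ| + C * |ρ τ|)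
        + ∑ τ ∈ children B' σ \ Bad, |pl τ - ρ τ * (lam σ / μ σ)| := by
  have hsplit : pl σ - ρ σ * lam σ / μ σ
      = ∑ τ ∈ children B' σ, (pl τ - ρ τ * (lam σ / μ σ)) := by
    rw [Finset.sum_sub_distrib, ← Finset.sum_mul, mul_div_assoc,
      ← hpl.apply_eq_sum_children hB hB' href hσ, ← hρ.apply_eq_sum_children hB hB' href hσ]
  rw [hsplit, ← Finset.sum_inter_add_sum_sdiff _ Bad]
  refine (abs_add_le _ _).trans (add_le_add ?_ (Finset.abs_sum_le_sum_abs _ _))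
  exact (Finset.abs_sum_le_sum_abs _ _).trans
    (Finset.sum_le_sum fun τ _ => abs_sub_mul_le_of_abs_le hσC)

theorem e_constant_refinement_general {α : Type*} [BooleanAlgebra α] [DecidableEq α]
    (μ ρ lam pl : α → ℝ)
    (hμadd : IsAdditive μ)
    (hρadd : IsAdditive ρ) (hpladd : IsAdditive pl)
    (Bbd E C : ℝ) (hBbd : 0 < Bbd) (hE : 0 < E) (hC : 0 < C)
    (hρbd : ∀ A : Finset α, IsPartition A → (∑ σ ∈ A, |ρ σ|) ≤ Bbd)
    (hlambd : ∀ A : Finset α, IsPartition A → (∑ σ ∈ A, |lam σ|) ≤ Bbd)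
    (B B' Bm : Finset α) (hB : IsPartition B) (hB' : IsPartition B')
    (href : Refines B B')
    (hμposB' : ∀ σ ∈ B', 0 < μ σ)
    (hconst : ∀ σ ∈ B', σ ∉ Bm → |pl σ - ρ σ * lam σ / μ σ| < |lam σ| / E) :
    (∑ σ ∈ B.filter (fun σ => |lam σ / μ σ| ≤ C), |pl σ - ρ σ * lam σ / μ σ|)
      < 2 * Bbd / E
        + C * (∑ τ ∈ (B'.filter (fun τ =>
            ∃ σ ∈ B, τ ≤ σ ∧ 1 / E ≤ |lam τ / μ τ - lam σ / μ σ|)) ∪ Bm, |ρ τ|)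
        + (∑ τ ∈ (B'.filter (fun τ =>
            ∃ σ ∈ B, τ ≤ σ ∧ 1 / E ≤ |lam τ / μ τ - lam σ / μ σ|)) ∪ Bm, |pl τ|) := by
  set Bad := (B'.filter (fun τ =>
    ∃ σ ∈ B, τ ≤ σ ∧ 1 / E ≤ |lam τ / μ τ - lam σ / μ σ|)) ∪ Bm
  set F := B.filter (fun σ => |lam σ / μ σ| ≤ C)
  have hdisj : (F : Set α).PairwiseDisjoint (children B') :=
    (hB.pairwiseDisjoint_children fun τ hτ hbot => (hμposB' τ hτ).ne' (hbot ▸ hμadd.1)).subset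
      (Finset.coe_subset.2 (Finset.filter_subset _ _))
  have hgood : ∀ σ ∈ F, ∀ τ ∈ children B' σ \ Bad,
      |pl τ - ρ τ * (lam σ / μ σ)| < (|lam τ| + |ρ τ|) / E := by
    intro σ hσ τ hτ
    obtain ⟨⟨hτB', hτσ⟩, hτBad⟩ := Finset.mem_sdiff.1 hτ |>.imp_left Finset.mem_filter.1
    have hclose : |lam τ / μ τ - lam σ / μ σ| ≤ 1 / E := le_of_not_ge fun h =>
      hτBad (Finset.mem_union_left _ (Finset.mem_filter.2
        ⟨hτB', σ, (Finset.mem_filter.1 hσ).1, hτσ, h⟩))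
    have hτBm : τ ∉ Bm := fun h => hτBad (Finset.mem_union_right _ h)
    exact (abs_sub_mul_lt_of_abs_sub_le (mul_div_assoc (ρ τ) _ _ ▸ hconst τ hτB' hτBm)
      hclose).trans_eq (by ring)
  have hgood_sum : ∑ σ ∈ F, ∑ τ ∈ children B' σ \ Bad, |pl τ - ρ τ * (lam σ / μ σ)|
      < 2 * Bbd / E :=
    Finset.sum_sum_lt_two_mul_div (hdisj.mono fun σ => Finset.sdiff_subset)
      (fun σ _ => Finset.sdiff_subset.trans (children_subset B' σ)) hBbd hE
      (hlambd B' hB') (hρbd B' hB') hgood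
  have hbad_sum : ∑ σ ∈ F, ∑ τ ∈ children B' σ ∩ Bad, (|pl τ| + C * |ρ τ|)
      ≤ C * ∑ τ ∈ Bad, |ρ τ| + ∑ τ ∈ Bad, |pl τ| := by
    refine (Finset.sum_sum_le_sum_of_pairwiseDisjoint
      (hdisj.mono fun σ => Finset.inter_subset_left) (fun σ _ => Finset.inter_subset_right)
      fun τ => by positivity).trans_eq ?_
    rw [Finset.sum_add_distrib, Finset.mul_sum, add_comm]
  calc ∑ σ ∈ F, |pl σ - ρ σ * lam σ / μ σ|
      ≤ ∑ σ ∈ F, (∑ τ ∈ children B' σ ∩ Bad, (|pl τ| + C * |ρ τ|)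
          + ∑ τ ∈ children B' σ \ Bad, |pl τ - ρ τ * (lam σ / μ σ)|) :=
        Finset.sum_le_sum fun σ hσ => abs_sub_local_product_le hρadd hpladd hB hB' href Bad
          (Finset.mem_filter.1 hσ).1 (Finset.mem_filter.1 hσ).2
    _ < C * ∑ τ ∈ Bad, |ρ τ| + ∑ τ ∈ Bad, |pl τ| + 2 * Bbd / E := by
        rw [Finset.sum_add_distrib]; exact add_lt_add_of_le_of_lt hbad_sum hgood_sum
    _ = _ := by ring

/-- if ρ is E-constant on ℬ'∖ℬ⁻ (for the fixed λ and product
    ρλ = `pl`), then on the elements of ℬ of λ-density at most C, the product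
    ρλ is approximated by the local product ρ∗λ up to the stated error. -/
theorem e_constant_refinement {α : Type*} [BooleanAlgebra α] [DecidableEq α]
    (μ ρ lam pl : α → ℝ)
    (hμadd : IsAdditive μ) (hμ01 : ∀ σ, 0 ≤ μ σ ∧ μ σ ≤ 1) (hμtop : μ ⊤ = 1)
    (hρadd : IsAdditive ρ) (hlamadd : IsAdditive lam) (hpladd : IsAdditive pl)
    (Bbd E C : ℝ) (hBbd : 0 < Bbd) (hE : 0 < E) (hC : 0 < C)
    (hρbd : ∀ A : Finset α, IsPartition A → (∑ σ ∈ A, |ρ σ|) ≤ Bbd)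
    (hlambd : ∀ A : Finset α, IsPartition A → (∑ σ ∈ A, |lam σ|) ≤ Bbd)
    (B B' Bm : Finset α) (hB : IsPartition B) (hB' : IsPartition B')
    (href : Refines B B') (hBm : Bm ⊆ B')
    (hμposB : ∀ σ ∈ B, 0 < μ σ) (hμposB' : ∀ σ ∈ B', 0 < μ σ)
    (hconst : ∀ σ ∈ B', σ ∉ Bm → |pl σ - ρ σ * lam σ / μ σ| < |lam σ| / E) :
    (∑ σ ∈ B.filter (fun σ => |lam σ / μ σ| ≤ C), |pl σ - ρ σ * lam σ / μ σ|)
      < 2 * Bbd / E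
        + C * (∑ τ ∈ (B'.filter (fun τ =>
            ∃ σ ∈ B, τ ≤ σ ∧ 1 / E ≤ |lam τ / μ τ - lam σ / μ σ|)) ∪ Bm, |ρ τ|)
        + (∑ τ ∈ (B'.filter (fun τ =>
            ∃ σ ∈ B, τ ≤ σ ∧ 1 / E ≤ |lam τ / μ τ - lam σ / μ σ|)) ∪ Bm, |pl τ|) :=
  e_constant_refinement_general μ ρ lam pl hμadd hρadd hpladd Bbd E C hBbd hE hC hρbd hlambd B B' Bm
    hB hB' href hμposB' hconst
end

section
/- For any monotone function m̂ : ℕ → ℕ with m̂(n) ≥ n for all n, any natural numbers V ≥ 1, n₀, and m* ∈ [n₀, m̂^{2V}(n₀)], there exists v < 2V such that m* ≤ m̂^{v+1}(n₀) ≤ m̂(m*) and m̂^{v+2}(n₀) ≤ m̂²(m*); consequently [m̂^{v+1}(n₀), m̂^{v+2}(n₀)] ⊆ [m*, m̂²(m*)]. -/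
/-- interval localization: if m̂ is monotone and inflationary,
    V ≥ 1, and m* ∈ [n₀, m̂^{2V}(n₀)], then there is v < 2V with
    m* ≤ m̂^{v+1}(n₀) ≤ m̂(m*) and m̂^{v+2}(n₀) ≤ m̂²(m*); consequently
    [m̂^{v+1}(n₀), m̂^{v+2}(n₀)] ⊆ [m*, m̂²(m*)]. -/
theorem interval_localization (mhat : ℕ → ℕ)
    (hmono : Monotone mhat) (hinfl : ∀ n, n ≤ mhat n)
    (V n₀ mstar : ℕ) (hV : 1 ≤ V)
    (hmem : mstar ∈ Set.Icc n₀ (mhat^[2 * V] n₀)) :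
    ∃ v, v < 2 * V ∧
      mstar ≤ mhat^[v + 1] n₀ ∧
      mhat^[v + 1] n₀ ≤ mhat mstar ∧
      mhat^[v + 2] n₀ ≤ mhat (mhat mstar) ∧
      Set.Icc (mhat^[v + 1] n₀) (mhat^[v + 2] n₀) ⊆
        Set.Icc mstar (mhat (mhat mstar)) := by
  obtain ⟨h1, h2⟩ := hmem
  have hP : ∃ k, mstar ≤ mhat^[k] n₀ := ⟨2 * V, h2⟩
  classical
  set k := Nat.find hP with hk
  have hkspec : mstar ≤ mhat^[k] n₀ := Nat.find_spec hP
  have hkle : k ≤ 2 * V := Nat.find_le h2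
  -- choose v
  have key : ∃ v, v < 2 * V ∧ mstar ≤ mhat^[v + 1] n₀ ∧ mhat^[v] n₀ ≤ mstar := by
    rcases Nat.eq_zero_or_pos k with h0 | hpos
    · refine ⟨0, by omega, ?_, ?_⟩
      · have : mstar ≤ n₀ := by simpa [h0] using hkspec
        calc mstar ≤ n₀ := this
          _ ≤ mhat n₀ := hinfl n₀
          _ = mhat^[0 + 1] n₀ := by simp
      · simpa using h1
    · refine ⟨k - 1, by omega, ?_, ?_⟩
      · have : k - 1 + 1 = k := by omega
        rw [this]; exact hkspec
      · have := Nat.find_min hP (m := k - 1) (by omega)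
        omega
  obtain ⟨v, hv, hge, hle⟩ := key
  have hstep1 : mhat^[v + 1] n₀ ≤ mhat mstar := by
    have := hmono hle
    simpa [Function.iterate_succ_apply'] using this
  have hstep2 : mhat^[v + 2] n₀ ≤ mhat (mhat mstar) := by
    have := hmono hstep1
    simpa [Function.iterate_succ_apply'] using this
  refine ⟨v, hv, hge, hstep1, hstep2, ?_⟩
  intro x hx
  exact ⟨le_trans hge hx.1, le_trans hx.2 hstep2⟩
end
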